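/- arXiv:0809.2114 — 5 statements merged into one kernel-verified Lean document; each statement's English description precedes it below -/
import Mathlib

section
/- The function θ₀(R) = (−1 − 8R² + 24R⁴ log R + 8R⁶ + R⁸)/(4 R^{3/2} (1+R²)²) satisfies 𝓛θ₀ = 0 on (0,∞), and the Wronskian with φ₀ is constantly equal to one: φ₀(R) θ₀'(R) − φ₀'(R) θ₀(R) = 1 for all R > 0. -/
/-!
`θ₀ / φ₀ = R⁴/4 + 2R² + 6 log R - 2/R² - 1/(4R⁴)` has derivative `(1 + R²)⁴ / R⁵ = 1 / φ₀²`, so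
`θ₀` is the second solution that reduction of order builds from the zero mode `φ₀`: for
`θ = φ q` with `q' = 1 / φ²` one has `θ'' = φ'' q` and `φ θ' - φ' θ = φ² q' = 1`.
-/

/-- The zero-energy eigenfunction `φ₀(R) = R^{5/2}/(1+R²)²`. -/
noncomputable def phi0 (R : ℝ) : ℝ := R ^ ((5 : ℝ) / 2) / (1 + R ^ 2) ^ 2

/-- The second zero-energy solution
`θ₀(R) = (−1 − 8R² + 24R⁴ log R + 8R⁶ + R⁸)/(4R^{3/2}(1+R²)²)`. -/
noncomputable def theta0 (R : ℝ) : ℝ :=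
  (-1 - 8 * R ^ 2 + 24 * R ^ 4 * Real.log R + 8 * R ^ 6 + R ^ 8)
    / (4 * R ^ ((3 : ℝ) / 2) * (1 + R ^ 2) ^ 2)

section ReductionOfOrder

variable {φ φ' q : ℝ → ℝ} {x : ℝ}

theorem hasDerivAt_mul_of_hasDerivAt_inv_sq (hφ : HasDerivAt φ (φ' x) x)
    (hq : HasDerivAt q (φ x ^ 2)⁻¹ x) :
    HasDerivAt (φ * q) (φ' x * q x + (φ x)⁻¹) x := by
  refine (hφ.mul hq).congr_deriv ?_
  rcases eq_or_ne (φ x) 0 with h | h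
  · simp [h]
  · field_simp

theorem hasDerivAt_mul_add_inv_of_hasDerivAt_inv_sq {V : ℝ} (hφ : HasDerivAt φ (φ' x) x)
    (hφ' : HasDerivAt φ' (V * φ x) x) (hq : HasDerivAt q (φ x ^ 2)⁻¹ x) (hφx : φ x ≠ 0) :
    HasDerivAt (fun y ↦ φ' y * q y + (φ y)⁻¹) (V * (φ x * q x)) x := by
  refine ((hφ'.fun_mul hq).fun_add (hφ.fun_inv hφx)).congr_deriv ?_
  field_simp
  ring

theorem reduction_of_order {s : Set ℝ} (hs : IsOpen s) {θ : ℝ → ℝ} {V : ℝ} (hx : x ∈ s)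
    (hθ : Set.EqOn θ (φ * q) s) (hφ : ∀ y ∈ s, HasDerivAt φ (φ' y) y)
    (hq : ∀ y ∈ s, HasDerivAt q (φ y ^ 2)⁻¹ y) (hφ' : HasDerivAt φ' (V * φ x) x)
    (hφx : φ x ≠ 0) :
    deriv (deriv θ) x = V * θ x ∧ φ x * deriv θ x - φ' x * θ x = 1 := by
  have hθ' : ∀ y ∈ s, HasDerivAt θ (φ' y * q y + (φ y)⁻¹) y := fun y hy ↦
    (hasDerivAt_mul_of_hasDerivAt_inv_sq (hφ y hy) (hq y hy)).congr_of_eventuallyEq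
      (Filter.eventuallyEq_of_mem (hs.mem_nhds hy) hθ)
  have hderiv : deriv θ =ᶠ[nhds x] fun y ↦ φ' y * q y + (φ y)⁻¹ :=
    Filter.eventually_of_mem (hs.mem_nhds hx) fun y hy ↦ (hθ' y hy).deriv
  refine ⟨?_, ?_⟩
  · rw [hderiv.deriv_eq, hθ hx, Pi.mul_apply,
      (hasDerivAt_mul_add_inv_of_hasDerivAt_inv_sq (hφ x hx) hφ' (hq x hx) hφx).deriv]
  · rw [(hθ' x hx).deriv, hθ hx, Pi.mul_apply]
    field_simp
    ring

end ReductionOfOrder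

noncomputable def phi0Deriv (R : ℝ) : ℝ :=
  R ^ ((3 : ℝ) / 2) * (5 - 3 * R ^ 2) / (2 * (1 + R ^ 2) ^ 3)

noncomputable def theta0DivPhi0 (R : ℝ) : ℝ :=
  R ^ 4 / 4 + 2 * R ^ 2 + 6 * Real.log R - 2 / R ^ 2 - 1 / (4 * R ^ 4)

section Positive

variable {R : ℝ} (hR : 0 < R)
include hR

theorem phi0_pos : 0 < phi0 R := by unfold phi0; positivity

theorem hasDerivAt_phi0 : HasDerivAt phi0 (phi0Deriv R) R := by
  have h := (Real.hasDerivAt_rpow_const (p := (5 : ℝ) / 2) (Or.inl hR.ne')).div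
    (((hasDerivAt_pow 2 R).const_add 1).fun_pow 2) (by positivity)
  refine h.congr_deriv ?_
  rw [show (5 : ℝ) / 2 - 1 = 3 / 2 by norm_num, show (5 : ℝ) / 2 = 3 / 2 + 1 by norm_num,
    Real.rpow_add_one hR.ne', phi0Deriv]
  field_simp
  ring

theorem hasDerivAt_phi0Deriv :
    HasDerivAt phi0Deriv ((15 / (4 * R ^ 2) - 24 / (1 + R ^ 2) ^ 2) * phi0 R) R := by
  have h := ((Real.hasDerivAt_rpow_const (p := (3 : ℝ) / 2) (Or.inl hR.ne')).fun_mul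
    (((hasDerivAt_pow 2 R).const_mul 3).const_sub 5)).fun_div
    ((((hasDerivAt_pow 2 R).const_add 1).fun_pow 3).const_mul 2) (by positivity)
  refine h.congr_deriv ?_
  rw [phi0, show (3 : ℝ) / 2 - 1 = 1 / 2 by norm_num, show (3 : ℝ) / 2 = 1 / 2 + 1 by norm_num,
    show (5 : ℝ) / 2 = 1 / 2 + 1 + 1 by norm_num]
  simp only [Real.rpow_add_one hR.ne']
  generalize R ^ ((1 : ℝ) / 2) = t
  field_simp
  ring

theorem hasDerivAt_theta0DivPhi0 : HasDerivAt theta0DivPhi0 (phi0 R ^ 2)⁻¹ R := by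
  have h := (((((hasDerivAt_pow 4 R).div_const 4).fun_add
    ((hasDerivAt_pow 2 R).const_mul 2)).fun_add ((Real.hasDerivAt_log hR.ne').const_mul 6)).fun_sub
    ((hasDerivAt_const R 2).fun_div (hasDerivAt_pow 2 R) (by positivity))).fun_sub
    ((hasDerivAt_const R 1).fun_div ((hasDerivAt_pow 4 R).const_mul 4) (by positivity))
  refine h.congr_deriv ?_
  have h5 : (R ^ ((5 : ℝ) / 2)) ^ 2 = R ^ 5 := by
    rw [← Real.rpow_natCast, ← Real.rpow_mul hR.le]
    norm_num
  rw [phi0, div_pow, h5]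
  field_simp
  ring

theorem theta0_eq_phi0_mul_theta0DivPhi0 : theta0 R = phi0 R * theta0DivPhi0 R := by
  rw [theta0, phi0, theta0DivPhi0, show (5 : ℝ) / 2 = 4 - 3 / 2 by norm_num,
    Real.rpow_sub hR, Real.rpow_ofNat]
  have : 0 < R ^ ((3 : ℝ) / 2) := by positivity
  field_simp
  ring

end Positive

theorem theta0_zero_mode_and_wronskian :
    ∀ R : ℝ, 0 < R →
      deriv (deriv theta0) R = (15 / (4 * R ^ 2) - 24 / (1 + R ^ 2) ^ 2) * theta0 R ∧
      phi0 R * deriv theta0 R - deriv phi0 R * theta0 R = 1 := by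
  intro R hR
  rw [(hasDerivAt_phi0 hR).deriv]
  exact reduction_of_order isOpen_Ioi hR (fun y hy ↦ theta0_eq_phi0_mul_theta0DivPhi0 hy)
    (fun y hy ↦ hasDerivAt_phi0 hy) (fun y hy ↦ hasDerivAt_theta0DivPhi0 hy)
    (hasDerivAt_phi0Deriv hR) (phi0_pos hR).ne'
end

section
/- The commutator potential U pairs to zero against the zero-energy eigenfunction: ∫₀^∞ U(R) φ₀(R)² dR = ∫₀^∞ ( 48/(1+R²)² − 96R²/(1+R²)³ ) R⁵/(1+R²)⁴ dR = 0. (This is the statement F(0,0) = 0 for the kernel of the transference operator.) -/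
noncomputable def Upot (R : ℝ) : ℝ := 48 / (1 + R ^ 2) ^ 2 - 96 * R ^ 2 / (1 + R ^ 2) ^ 3

/-!
With `g R = R / (1 + R²)` one has `g' R = (1 - R²) / (1 + R²)²`, and the integrand
`U φ₀²` is exactly `48 g⁵ g' = (8 g⁶)'`. Since `g` vanishes at `0` and at `∞`, so does the
primitive `8 g⁶`, and the integral is zero.
-/

open MeasureTheory Set Filter Topology

theorem integral_Ioi_pow_mul_deriv_eq_zero {g g' : ℝ → ℝ} {a : ℝ} (n : ℕ)
    (hderiv : ∀ x ∈ Ici a, HasDerivAt g (g' x) x) (ha : g a = 0)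
    (htop : Tendsto g atTop (𝓝 0)) (hint : IntegrableOn (fun x ↦ g x ^ n * g' x) (Ioi a)) :
    ∫ x in Ioi a, g x ^ n * g' x = 0 := by
  have hprim : ∀ x ∈ Ici a,
      HasDerivAt (fun x ↦ g x ^ (n + 1) / (n + 1)) (g x ^ n * g' x) x := fun x hx ↦ by
    refine (((hderiv x hx).fun_pow (n + 1)).div_const ((n : ℝ) + 1)).congr_deriv ?_
    push_cast
    field_simp
  have hlim : Tendsto (fun x ↦ g x ^ (n + 1) / (n + 1)) atTop (𝓝 0) := by
    simpa using (htop.pow (n + 1)).div_const ((n : ℝ) + 1)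
  rw [integral_Ioi_of_hasDerivAt_of_tendsto' hprim hint hlim, ha]
  simp

theorem hasDerivAt_div_one_add_sq (R : ℝ) :
    HasDerivAt (fun R : ℝ ↦ R / (1 + R ^ 2)) ((1 - R ^ 2) / (1 + R ^ 2) ^ 2) R := by
  have hsq : HasDerivAt (fun R : ℝ ↦ 1 + R ^ 2) (2 * R) R := by
    simpa using (hasDerivAt_pow 2 R).const_add 1
  refine ((hasDerivAt_id' R).div hsq (by positivity)).congr_deriv ?_
  ring

theorem tendsto_div_one_add_sq_atTop :
    Tendsto (fun R : ℝ ↦ R / (1 + R ^ 2)) atTop (𝓝 0) := by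
  refine squeeze_zero_norm' ?_ tendsto_inv_atTop_zero
  filter_upwards [eventually_gt_atTop 0] with R hR
  rw [Real.norm_eq_abs, abs_of_pos (by positivity), div_le_iff₀ (by positivity)]
  field_simp
  nlinarith

theorem abs_div_one_add_sq_le_one (R : ℝ) : |R / (1 + R ^ 2)| ≤ 1 := by
  have hpos : 0 < 1 + R ^ 2 := by positivity
  rw [abs_div, abs_of_pos hpos, div_le_one hpos]
  nlinarith [sq_abs R, abs_nonneg R]

theorem abs_one_sub_sq_div_le (R : ℝ) :
    |(1 - R ^ 2) / (1 + R ^ 2) ^ 2| ≤ (1 + R ^ 2)⁻¹ := by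
  have hpos : 0 < 1 + R ^ 2 := by positivity
  rw [abs_div, abs_of_pos (pow_pos hpos 2), div_le_iff₀ (pow_pos hpos 2),
    sq (1 + R ^ 2), inv_mul_cancel_left₀ hpos.ne', abs_le]
  constructor <;> nlinarith [sq_nonneg R]

theorem integrable_pow_mul_deriv_div_one_add_sq (n : ℕ) :
    Integrable fun R : ℝ ↦ (R / (1 + R ^ 2)) ^ n * ((1 - R ^ 2) / (1 + R ^ 2) ^ 2) := by
  refine integrable_inv_one_add_sq.mono' ?_ (.of_forall fun R ↦ ?_)
  · exact Continuous.aestronglyMeasurable (by fun_prop (disch := intros; positivity))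
  · rw [norm_mul, norm_pow, Real.norm_eq_abs, Real.norm_eq_abs]
    exact (mul_le_of_le_one_left (abs_nonneg _)
      (pow_le_one₀ (abs_nonneg _) (abs_div_one_add_sq_le_one R))).trans (abs_one_sub_sq_div_le R)

theorem Upot_mul_phi0_sq {R : ℝ} (hR : 0 ≤ R) :
    Upot R * phi0 R ^ 2 =
      (48 / (1 + R ^ 2) ^ 2 - 96 * R ^ 2 / (1 + R ^ 2) ^ 3) * (R ^ 5 / (1 + R ^ 2) ^ 4) := by
  have hrpow : (R ^ ((5 : ℝ) / 2)) ^ 2 = R ^ 5 := by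
    rw [← Real.rpow_natCast _ 2, ← Real.rpow_mul hR]
    norm_num
  simp only [phi0, Upot, div_pow, hrpow]
  ring

theorem potential_mul_sq_eq_pow_mul_deriv (R : ℝ) :
    (48 / (1 + R ^ 2) ^ 2 - 96 * R ^ 2 / (1 + R ^ 2) ^ 3) * (R ^ 5 / (1 + R ^ 2) ^ 4) =
      48 * ((R / (1 + R ^ 2)) ^ 5 * ((1 - R ^ 2) / (1 + R ^ 2) ^ 2)) := by
  field_simp
  ring

theorem U_orthogonal_to_phi0_squared :
    (∫ R in Set.Ioi (0 : ℝ), Upot R * (phi0 R) ^ 2)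
      = (∫ R in Set.Ioi (0 : ℝ),
          (48 / (1 + R ^ 2) ^ 2 - 96 * R ^ 2 / (1 + R ^ 2) ^ 3)
            * (R ^ 5 / (1 + R ^ 2) ^ 4)) ∧
    (∫ R in Set.Ioi (0 : ℝ),
        (48 / (1 + R ^ 2) ^ 2 - 96 * R ^ 2 / (1 + R ^ 2) ^ 3)
          * (R ^ 5 / (1 + R ^ 2) ^ 4)) = 0 := by
  refine ⟨setIntegral_congr_fun measurableSet_Ioi fun R hR ↦ Upot_mul_phi0_sq (le_of_lt hR),
    ?_⟩
  simp_rw [potential_mul_sq_eq_pow_mul_deriv]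
  rw [integral_const_mul, integral_Ioi_pow_mul_deriv_eq_zero 5
    (fun R _ ↦ hasDerivAt_div_one_add_sq R) (by simp) tendsto_div_one_add_sq_atTop
    (integrable_pow_mul_deriv_div_one_add_sq 5).integrableOn, mul_zero]
end

section
/- The following two integrals involving the zero-energy eigenfunction evaluate exactly: ∫₀^∞ ( R φ₀'(R) )² dR = 17/120 and ∫₀^∞ R φ₀'(R) φ₀(R) dR = −1/12. In particular ⟨Rφ₀', φ₀⟩ = −(1/2)‖φ₀‖², which gives the diagonal entry K_{ee} = −1/12 of the transference operator. -/
/- The substitution `s = 1 / (1 + R²)` maps `(0, ∞)` onto `(0, 1)` with `dR = -ds / (2 R s²)`,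
and turns `φ₀(R)² dR = R (1 - s)² s² dR` into `(1 - s)² ds / 2`. Since
`R φ₀'(R) / φ₀(R) = 5/2 - 4R²/(1 + R²) = (8s - 3)/2`, all three integrals become integrals of
polynomials times `(1 - s)²` over `[0, 1]`. -/

open MeasureTheory Set Filter

lemma hasDerivAt_inv_one_add_sq (x : ℝ) :
    HasDerivAt (fun y : ℝ => (1 + y ^ 2)⁻¹) (-(2 * x) * ((1 + x ^ 2)⁻¹) ^ 2) x := by
  have h : HasDerivAt (fun y : ℝ => 1 + y ^ 2) (2 * x) x := by
    simpa using (hasDerivAt_pow 2 x).const_add 1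
  exact (h.inv (by positivity)).congr_deriv (by rw [inv_pow, div_eq_mul_inv])

lemma tendsto_inv_one_add_sq_atTop : Tendsto (fun x : ℝ => (1 + x ^ 2)⁻¹) atTop (nhds 0) :=
  tendsto_inv_atTop_zero.comp <| tendsto_atTop_add_const_left _ 1 <|
    tendsto_pow_atTop two_ne_zero

lemma mul_sq_inv_one_add_sq_le (x : ℝ) :
    x * ((1 + x ^ 2)⁻¹) ^ 2 ≤ (1 + x ^ 2)⁻¹ := by
  have h : 0 < 1 + x ^ 2 := by positivity
  rw [sq, ← mul_assoc, mul_le_iff_le_one_left (inv_pos.2 h)]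
  exact mul_inv_le_one_of_le₀ (by nlinarith [sq_nonneg (x - 1)]) h.le

theorem integral_Ioi_mul_comp_inv_one_add_sq {g : ℝ → ℝ} (hg : Continuous g) :
    ∫ x in Ioi (0 : ℝ), x * g (1 + x ^ 2)⁻¹ * ((1 + x ^ 2)⁻¹) ^ 2
      = (1 / 2) * ∫ s in (0 : ℝ)..1, g s := by
  set F : ℝ → ℝ := fun x => -(1 / 2) * ∫ s in (0 : ℝ)..(1 + x ^ 2)⁻¹, g s
  have hderiv : ∀ x ∈ Ici (0 : ℝ),
      HasDerivAt F (x * g (1 + x ^ 2)⁻¹ * ((1 + x ^ 2)⁻¹) ^ 2) x := fun x _ =>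
    (((hg.integral_hasStrictDerivAt 0 _).hasDerivAt.comp x
      (hasDerivAt_inv_one_add_sq x)).const_mul (-(1 / 2))).congr_deriv (by ring)
  obtain ⟨M, hM⟩ := isCompact_Icc.exists_bound_of_continuousOn (hg.continuousOn (s := Icc 0 1))
  have hint : IntegrableOn (fun x => x * g (1 + x ^ 2)⁻¹ * ((1 + x ^ 2)⁻¹) ^ 2) (Ioi 0) := by
    refine (integrable_inv_one_add_sq.const_mul M).integrableOn.mono' (by fun_prop) ?_
    rw [ae_restrict_iff' measurableSet_Ioi]
    refine ae_of_all _ fun x (hx : 0 < x) => ?_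
    have hσ : (1 + x ^ 2)⁻¹ ∈ Icc (0 : ℝ) 1 :=
      ⟨by positivity, inv_le_one_of_one_le₀ (by nlinarith)⟩
    calc ‖x * g (1 + x ^ 2)⁻¹ * ((1 + x ^ 2)⁻¹) ^ 2‖
        = ‖g (1 + x ^ 2)⁻¹‖ * (x * ((1 + x ^ 2)⁻¹) ^ 2) := by
          rw [norm_mul, norm_mul, Real.norm_of_nonneg hx.le, Real.norm_of_nonneg (sq_nonneg _)]
          ring
      _ ≤ M * (1 + x ^ 2)⁻¹ :=
          mul_le_mul (hM _ hσ) (mul_sq_inv_one_add_sq_le x) (by positivity)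
            ((norm_nonneg _).trans (hM _ hσ))
  have htend : Tendsto F atTop (nhds 0) := by
    have hG : Continuous fun u => -(1 / 2) * ∫ s in (0 : ℝ)..u, g s := by fun_prop
    simpa [F, Function.comp_def] using (hG.tendsto 0).comp tendsto_inv_one_add_sq_atTop
  rw [integral_Ioi_of_hasDerivAt_of_tendsto' hderiv hint htend]
  simp [F]

theorem integral_quadratic_mul_one_sub_sq (a b c : ℝ) :
    ∫ s in (0 : ℝ)..1, (a + b * s + c * s ^ 2) * (1 - s) ^ 2 = a / 3 + b / 12 + c / 30 := by
  have hexpand : ∀ s : ℝ, (a + b * s + c * s ^ 2) * (1 - s) ^ 2 =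
      a * s ^ 0 + (b - 2 * a) * s ^ 1 + (a - 2 * b + c) * s ^ 2 + (b - 2 * c) * s ^ 3 +
        c * s ^ 4 := fun s => by ring
  simp (disch := apply Continuous.intervalIntegrable; fun_prop) only
    [hexpand, integral_pow, intervalIntegral.integral_add, intervalIntegral.integral_const_mul]
  norm_num
  ring

lemma phi0_sq {R : ℝ} (hR : 0 ≤ R) :
    phi0 R ^ 2 = R * (1 - (1 + R ^ 2)⁻¹) ^ 2 * ((1 + R ^ 2)⁻¹) ^ 2 := by
  have h : (R ^ ((5 : ℝ) / 2)) ^ 2 = R ^ 5 := by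
    rw [← Real.rpow_natCast, ← Real.rpow_mul hR]
    norm_num
  rw [phi0, div_pow, h]
  field_simp
  ring

lemma mul_deriv_phi0 {R : ℝ} (hR : 0 < R) :
    R * deriv phi0 R = (8 * (1 + R ^ 2)⁻¹ - 3) / 2 * phi0 R := by
  have hnum := Real.hasDerivAt_rpow_const (p := (5 : ℝ) / 2) (Or.inl hR.ne')
  have hden := ((hasDerivAt_pow 2 R).const_add 1).fun_pow 2
  have hphi0 : HasDerivAt phi0 _ R := hnum.div hden (by positivity)
  rw [hphi0.deriv, Real.rpow_sub_one hR.ne', phi0]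
  field_simp
  ring

theorem integral_quadratic_inv_one_add_sq_mul_phi0_sq (a b c : ℝ) :
    ∫ R in Ioi (0 : ℝ), (a + b * (1 + R ^ 2)⁻¹ + c * ((1 + R ^ 2)⁻¹) ^ 2) * phi0 R ^ 2
      = (a / 3 + b / 12 + c / 30) / 2 := by
  have hg : Continuous fun s : ℝ => (a + b * s + c * s ^ 2) * (1 - s) ^ 2 := by fun_prop
  rw [← integral_quadratic_mul_one_sub_sq, div_eq_inv_mul, ← one_div,
    ← integral_Ioi_mul_comp_inv_one_add_sq hg]
  refine setIntegral_congr_fun measurableSet_Ioi fun R (hR : 0 < R) => ?_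
  rw [phi0_sq hR.le]
  ring

theorem phi0_scaling_integrals :
    (∫ R in Set.Ioi (0 : ℝ), (R * deriv phi0 R) ^ 2) = 17 / 120 ∧
    (∫ R in Set.Ioi (0 : ℝ), R * deriv phi0 R * phi0 R) = -(1 / 12) ∧
    (∫ R in Set.Ioi (0 : ℝ), R * deriv phi0 R * phi0 R)
      = -(1 / 2) * ∫ R in Set.Ioi (0 : ℝ), (phi0 R) ^ 2 := by
  have hA : (∫ R in Ioi (0 : ℝ), (R * deriv phi0 R) ^ 2) = 17 / 120 := by
    calc _ = ∫ R in Ioi (0 : ℝ),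
            (9 / 4 + -12 * (1 + R ^ 2)⁻¹ + 16 * ((1 + R ^ 2)⁻¹) ^ 2) * phi0 R ^ 2 :=
          setIntegral_congr_fun measurableSet_Ioi fun R hR => by rw [mul_deriv_phi0 hR]; ring
      _ = 17 / 120 := by rw [integral_quadratic_inv_one_add_sq_mul_phi0_sq]; norm_num
  have hB : (∫ R in Ioi (0 : ℝ), R * deriv phi0 R * phi0 R) = -(1 / 12) := by
    calc _ = ∫ R in Ioi (0 : ℝ),
            (-(3 / 2) + 4 * (1 + R ^ 2)⁻¹ + 0 * ((1 + R ^ 2)⁻¹) ^ 2) * phi0 R ^ 2 :=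
          setIntegral_congr_fun measurableSet_Ioi fun R hR => by rw [mul_deriv_phi0 hR]; ring
      _ = -(1 / 12) := by rw [integral_quadratic_inv_one_add_sq_mul_phi0_sq]; norm_num
  have hC : (∫ R in Ioi (0 : ℝ), phi0 R ^ 2) = 1 / 6 := by
    calc _ = ∫ R in Ioi (0 : ℝ),
            (1 + 0 * (1 + R ^ 2)⁻¹ + 0 * ((1 + R ^ 2)⁻¹) ^ 2) * phi0 R ^ 2 := by simp
      _ = 1 / 6 := by rw [integral_quadratic_inv_one_add_sq_mul_phi0_sq]; norm_num
  exact ⟨hA, hB, by rw [hB, hC]; norm_num⟩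
end

section
/- Pointwise bound for spherically symmetric functions in ℝ²: for every continuously differentiable compactly supported function u : (0,∞) → ℝ and every r > 0, u(r)² ≤ 2 ( ∫₀^∞ u'(s)² s ds )^{1/2} ( ∫₀^∞ (u(s)²/s²) s ds )^{1/2}. In particular ‖u‖_∞² ≲ ‖∂ᵣu‖_{L²(r dr)} ‖u/r‖_{L²(r dr)}. -/
open MeasureTheory Set

/-!
Since `u` has compact support, `u(r)² = -∫_r^∞ (u²)' ≤ 2 ∫_0^∞ |u u'|`. For `s > 0` we have
`|u u'| = √((u'² s) (u²/s² · s))`, so Cauchy–Schwarz in the form `∫ √(f g) ≤ √(∫ f) √(∫ g)`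
bounds this by the product of the two weighted `L²(s ds)` norms.
-/

section CauchySchwarz

variable {α : Type*} [MeasurableSpace α] {μ : Measure α}

theorem MeasureTheory.Integrable.memLp_two_sqrt {f : α → ℝ} (hf : 0 ≤ᵐ[μ] f)
    (hf_int : Integrable f μ) : MemLp (fun x => √(f x)) 2 μ := by
  refine (memLp_two_iff_integrable_sq
    hf_int.aestronglyMeasurable.aemeasurable.sqrt.aestronglyMeasurable).2 ?_
  refine hf_int.congr ?_
  filter_upwards [hf] with x hx
  rw [Real.sq_sqrt hx]

theorem integral_sqrt_mul_le_sqrt_mul_sqrt {f g : α → ℝ} (hf : 0 ≤ᵐ[μ] f) (hg : 0 ≤ᵐ[μ] g)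
    (hf_int : Integrable f μ) (hg_int : Integrable g μ) :
    ∫ x, √(f x * g x) ∂μ ≤ √(∫ x, f x ∂μ) * √(∫ x, g x ∂μ) := by
  have holder := integral_mul_le_Lp_mul_Lq_of_nonneg Real.HolderConjugate.two_two
    (ae_of_all μ fun x => Real.sqrt_nonneg (f x)) (ae_of_all μ fun x => Real.sqrt_nonneg (g x))
    (by simpa using hf_int.memLp_two_sqrt hf)
    (by simpa using hg_int.memLp_two_sqrt hg)
  have sq_sqrt_ae {h : α → ℝ} (hh : 0 ≤ᵐ[μ] h) : ∫ x, √(h x) ^ (2 : ℝ) ∂μ = ∫ x, h x ∂μ := by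
    refine integral_congr_ae ?_
    filter_upwards [hh] with x hx
    rw [Real.rpow_two, Real.sq_sqrt hx]
  have sqrt_mul_ae : ∫ x, √(f x * g x) ∂μ = ∫ x, √(f x) * √(g x) ∂μ := by
    refine integral_congr_ae ?_
    filter_upwards [hf] with x hx
    exact Real.sqrt_mul hx (g x)
  rwa [sqrt_mul_ae, Real.sqrt_eq_rpow, Real.sqrt_eq_rpow, ← sq_sqrt_ae hf, ← sq_sqrt_ae hg]

end CauchySchwarz

theorem integrable_of_continuousOn_of_eq_zero_off_isCompact {α E : Type*} [TopologicalSpace α]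
    [T2Space α] [MeasurableSpace α] [OpensMeasurableSpace α] {μ : Measure α}
    [IsFiniteMeasureOnCompacts μ] [NormedAddCommGroup E] {g : α → E} {K U : Set α}
    (hK : IsCompact K) (hU : IsOpen U) (hKU : K ⊆ U) (hg : ContinuousOn g U)
    (hgK : ∀ x ∉ K, g x = 0) : Integrable g μ := by
  have htsupport : tsupport g ⊆ K :=
    closure_minimal (Function.support_subset_iff'.2 hgK) hK.isClosed
  exact (hg.continuous_of_tsupport_subset hU (htsupport.trans hKU)
    ).integrable_of_hasCompactSupport (HasCompactSupport.intro hK hgK)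

theorem HasCompactSupport.le_integral_Ioi_abs_deriv {f : ℝ → ℝ} (hf : ContDiff ℝ 1 f)
    (h2f : HasCompactSupport f) (b : ℝ) : f b ≤ ∫ x in Ioi b, |deriv f x| := by
  rw [← neg_neg (f b), ← h2f.integral_Ioi_deriv_eq hf b]
  exact (neg_le_abs _).trans abs_integral_le_integral_abs

section Radial

variable {u : ℝ → ℝ}

theorem abs_deriv_sq_eq_two_mul_sqrt {s : ℝ} (hu : DifferentiableAt ℝ u s) (hs : 0 < s) :
    |deriv (fun s => u s ^ 2) s| = 2 * √((deriv u s ^ 2 * s) * (u s ^ 2 / s ^ 2 * s)) := by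
  rw [show (deriv u s ^ 2 * s) * (u s ^ 2 / s ^ 2 * s) = (u s * deriv u s) ^ 2 by field_simp,
    Real.sqrt_sq_eq_abs, deriv_fun_pow hu, abs_mul, abs_mul]
  norm_num
  ring

theorem integrable_deriv_sq_mul (hu : ContDiff ℝ 1 u) (hcomp : HasCompactSupport u) :
    Integrable fun s => deriv u s ^ 2 * s := by
  have hu' : Continuous (deriv u) := hu.continuous_deriv le_rfl
  refine integrable_of_continuousOn_of_eq_zero_off_isCompact hcomp isOpen_univ
    (subset_univ _) (by fun_prop) fun s hs => ?_
  rw [image_eq_zero_of_notMem_tsupport fun h => hs (tsupport_deriv_subset h)]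
  ring

theorem integrable_sq_div_sq_mul (hu : Continuous u) (hcomp : HasCompactSupport u)
    (hsupp : tsupport u ⊆ Ioi 0) : Integrable fun s => u s ^ 2 / s ^ 2 * s := by
  refine integrable_of_continuousOn_of_eq_zero_off_isCompact hcomp isOpen_Ioi hsupp
    (((hu.pow 2).continuousOn.div (continuous_pow 2).continuousOn
      fun s hs => pow_ne_zero 2 (ne_of_gt hs)).mul continuousOn_id) fun s hs => ?_
  rw [image_eq_zero_of_notMem_tsupport hs]
  ring

end Radial

theorem radial_pointwise_bound (u : ℝ → ℝ) (hu : ContDiff ℝ 1 u)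
    (hcomp : HasCompactSupport u) (hsupp : tsupport u ⊆ Set.Ioi 0)
    (r : ℝ) (hr : 0 < r) :
    (u r) ^ 2 ≤
      2 * Real.sqrt (∫ s in Set.Ioi (0 : ℝ), (deriv u s) ^ 2 * s)
        * Real.sqrt (∫ s in Set.Ioi (0 : ℝ), ((u s) ^ 2 / s ^ 2) * s) := by
  have hsq : ContDiff ℝ 1 fun s => u s ^ 2 := hu.pow 2
  have hsq_comp : HasCompactSupport fun s => u s ^ 2 :=
    hcomp.comp_left (g := fun x => x ^ 2) (by norm_num)
  have hsq_deriv_int : Integrable fun s => |deriv (fun s => u s ^ 2) s| :=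
    (hsq.continuous_deriv le_rfl).abs.integrable_of_hasCompactSupport hsq_comp.deriv.abs
  have nonneg_on_Ioi {g : ℝ → ℝ} (hg : ∀ s : ℝ, 0 < s → 0 ≤ g s) :
      0 ≤ᵐ[volume.restrict (Ioi 0)] g :=
    ae_restrict_of_forall_mem measurableSet_Ioi hg
  calc u r ^ 2 ≤ ∫ s in Ioi r, |deriv (fun s => u s ^ 2) s| :=
        hsq_comp.le_integral_Ioi_abs_deriv hsq r
    _ ≤ ∫ s in Ioi 0, |deriv (fun s => u s ^ 2) s| :=
        setIntegral_mono_set hsq_deriv_int.integrableOn (ae_of_all _ fun s => abs_nonneg _)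
          (Ioi_subset_Ioi hr.le).eventuallyLE
    _ = 2 * ∫ s in Ioi 0, √((deriv u s ^ 2 * s) * (u s ^ 2 / s ^ 2 * s)) := by
        rw [← integral_const_mul]
        exact setIntegral_congr_fun measurableSet_Ioi fun s hs =>
          abs_deriv_sq_eq_two_mul_sqrt (hu.differentiable one_ne_zero s) hs
    _ ≤ 2 * (√(∫ s in Ioi 0, deriv u s ^ 2 * s) * √(∫ s in Ioi 0, u s ^ 2 / s ^ 2 * s)) := by
        gcongr
        exact integral_sqrt_mul_le_sqrt_mul_sqrt (nonneg_on_Ioi fun s hs => by positivity)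
          (nonneg_on_Ioi fun s hs => by positivity)
          (integrable_deriv_sq_mul hu hcomp).integrableOn
          (integrable_sq_div_sq_mul hu.continuous hcomp hsupp).integrableOn
    _ = _ := by rw [mul_assoc]
end

section
/- Let β > 0 and, in the rescaled time variable τ > 0, set λ(τ) = ((β+1)τ)^{β/(β+1)} exp( ((β+1)τ)^{1/(β+1)} ) and ω(τ) = λ'(τ)/λ(τ) = (β/(β+1)) τ^{-1} + ((β+1)τ)^{-β/(β+1)}. Then: (i) ∫_τ^∞ λ(s)^{-1} ds is finite for every τ > 0; (ii) for every σ ∈ (τ, ∞] the function U₀(τ,σ) = λ(τ) ∫_τ^σ λ(s)^{-1} ds satisfies ∂_τ U₀(τ,σ) − ω(τ) U₀(τ,σ) = −1, hence ∂_τ( ∂_τ − ω(τ) ) U₀(·,σ) = 0, with U₀(σ,σ) = 0 and ∂_τU₀(τ,σ)|_{τ=σ} = −1; (iii) there is a constant C = C(β) such that λ(τ) ∫_τ^∞ λ(s)^{-1} ds ≤ C / ω(τ) for all τ ≥ 1. -/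
/- STATEMENT 19: properties of the rescaled blow-up rate
λ(τ) = ((β+1)τ)^{β/(β+1)} exp(((β+1)τ)^{1/(β+1)}) and of
ω(τ) = λ'(τ)/λ(τ) = (β/(β+1))τ⁻¹ + ((β+1)τ)^{−β/(β+1)}:
(i) ∫_τ^∞ λ(s)⁻¹ ds < ∞;
(ii) U₀(τ,σ) = λ(τ)∫_τ^σ λ(s)⁻¹ ds satisfies ∂_τU₀ − ωU₀ = −1, hence
∂_τ(∂_τ − ω)U₀ = 0, with U₀(σ,σ) = 0 and ∂_τU₀|_{τ=σ} = −1 (the case σ = ∞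
being included via the Ioi-integral);
(iii) λ(τ)∫_τ^∞ λ(s)⁻¹ ds ≤ C/ω(τ) for τ ≥ 1. -/

/-- The blow-up rate in rescaled time,
`λ(τ) = ((β+1)τ)^{β/(β+1)} exp(((β+1)τ)^{1/(β+1)})`. -/
noncomputable def lamTau (β τ : ℝ) : ℝ :=
  ((β + 1) * τ) ^ (β / (β + 1)) * Real.exp (((β + 1) * τ) ^ (1 / (β + 1)))

/-- `ω(τ) = (β/(β+1))τ⁻¹ + ((β+1)τ)^{−β/(β+1)}`. -/
noncomputable def omTau (β τ : ℝ) : ℝ :=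
  (β / (β + 1)) * τ⁻¹ + ((β + 1) * τ) ^ (-(β / (β + 1)))

/-- The backward fundamental solution `U₀(τ,σ) = λ(τ)∫_τ^σ λ(s)⁻¹ ds`. -/
noncomputable def U0 (β τ σ : ℝ) : ℝ := lamTau β τ * ∫ s in τ..σ, (lamTau β s)⁻¹

/-!
Write `x = (β+1)τ`. The phase `p(τ) = x^{1/(β+1)}` has `p' = x^{-β/(β+1)}`, so
`λ = e^{p} / p'` and `λ⁻¹ = -(e^{-p})'`. As `e^{-p} → 0`, the positive function `λ⁻¹` is
integrable on `(τ, ∞)` with `∫_τ^∞ λ⁻¹ = e^{-p(τ)}`, so `λ(τ) ∫_τ^∞ λ⁻¹ = x^{β/(β+1)}`. The equation `∂_τ U₀ = ω U₀ - 1` is the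
product rule for `λ · ∫ λ⁻¹` with `λ' = ω λ`. Finally `x^{β/(β+1)} ω = 1 + β x^{-1/(β+1)}`,
which is at most `β + 1` once `x ≥ 1`.
-/

open Real MeasureTheory Set Filter Topology

lemma hasDerivAt_const_mul_rpow {c τ : ℝ} (r : ℝ) (h : 0 < c * τ) :
    HasDerivAt (fun t => (c * t) ^ r) (c * r * (c * τ) ^ (r - 1)) τ := by
  simpa using ((hasDerivAt_id τ).const_mul c).rpow_const (p := r) (Or.inl h.ne')

lemma HasDerivAt.mul_of_hasDerivAt_neg_inv {l I : ℝ → ℝ} {ω τ : ℝ}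
    (hl : HasDerivAt l (ω * l τ) τ) (hI : HasDerivAt I (-(l τ)⁻¹) τ) (h0 : l τ ≠ 0) :
    HasDerivAt (fun x => l x * I x) (ω * (l τ * I τ) - 1) τ := by
  refine (hl.mul hI).congr_deriv ?_
  field_simp
  ring

noncomputable def lamTauInvTail (β τ : ℝ) : ℝ := exp (-(((β + 1) * τ) ^ (1 / (β + 1))))

section
variable {β τ : ℝ}

lemma hasDerivAt_phase (hβ : 0 < β + 1) (hτ : 0 < τ) :
    HasDerivAt (fun t => ((β + 1) * t) ^ (1 / (β + 1)))
      (((β + 1) * τ) ^ (-(β / (β + 1)))) τ := by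
  convert hasDerivAt_const_mul_rpow (1 / (β + 1)) (mul_pos hβ hτ) using 1
  rw [mul_one_div_cancel hβ.ne', one_mul]
  congr 1
  field_simp; ring

lemma lamTau_pos (hβ : 0 < β + 1) (hτ : 0 < τ) : 0 < lamTau β τ := by
  unfold lamTau; have := mul_pos hβ hτ; positivity

lemma hasDerivAt_lamTau (hβ : 0 < β + 1) (hτ : 0 < τ) :
    HasDerivAt (lamTau β) (omTau β τ * lamTau β τ) τ := by
  have hx := mul_pos hβ hτ
  refine ((hasDerivAt_const_mul_rpow (β / (β + 1)) hx).mul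
    (hasDerivAt_phase hβ hτ).exp).congr_deriv ?_
  unfold omTau lamTau
  rw [rpow_sub_one hx.ne', rpow_neg hx.le]
  have := (rpow_pos_of_pos hx (β / (β + 1))).ne'
  field_simp

lemma hasDerivAt_lamTauInvTail (hβ : 0 < β + 1) (hτ : 0 < τ) :
    HasDerivAt (lamTauInvTail β) (-(lamTau β τ)⁻¹) τ := by
  have hx := mul_pos hβ hτ
  refine ((hasDerivAt_phase hβ hτ).neg.exp).congr_deriv ?_
  rw [rpow_neg hx.le, lamTau, Pi.neg_apply, exp_neg, mul_inv]
  ring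

lemma hasDerivAt_neg_lamTauInvTail (hβ : 0 < β + 1) (hτ : 0 < τ) :
    HasDerivAt (fun x => -lamTauInvTail β x) (lamTau β τ)⁻¹ τ :=
  (hasDerivAt_lamTauInvTail hβ hτ).neg.congr_deriv (neg_neg _)

lemma tendsto_lamTauInvTail_atTop (hβ : 0 < β + 1) :
    Tendsto (lamTauInvTail β) atTop (𝓝 0) :=
  tendsto_exp_atBot.comp <| tendsto_neg_atTop_atBot.comp <|
    (tendsto_rpow_atTop (by positivity)).comp (tendsto_id.const_mul_atTop hβ)

lemma lamTau_mul_lamTauInvTail :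
    lamTau β τ * lamTauInvTail β τ = ((β + 1) * τ) ^ (β / (β + 1)) := by
  rw [lamTau, lamTauInvTail, mul_assoc, ← exp_add, add_neg_cancel, exp_zero, mul_one]

lemma integrableOn_Ioi_inv_lamTau (hβ : 0 < β + 1) (hτ : 0 < τ) :
    IntegrableOn (fun s => (lamTau β s)⁻¹) (Ioi τ) :=
  integrableOn_Ioi_deriv_of_nonneg'
    (fun x hx => hasDerivAt_neg_lamTauInvTail hβ (hτ.trans_le hx))
    (fun _ hx => (inv_pos.2 (lamTau_pos hβ (hτ.trans hx))).le)
    (by simpa using (tendsto_lamTauInvTail_atTop hβ).neg)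

lemma integral_Ioi_inv_lamTau (hβ : 0 < β + 1) (hτ : 0 < τ) :
    ∫ s in Ioi τ, (lamTau β s)⁻¹ = lamTauInvTail β τ := by
  rw [integral_Ioi_of_hasDerivAt_of_nonneg'
    (fun x hx => hasDerivAt_neg_lamTauInvTail hβ (hτ.trans_le hx))
    (fun _ hx => (inv_pos.2 (lamTau_pos hβ (hτ.trans hx))).le)
    (by simpa using (tendsto_lamTauInvTail_atTop hβ).neg), sub_neg_eq_add, zero_add]

lemma intervalIntegral_inv_lamTau {σ : ℝ} (hβ : 0 < β + 1) (hτ : 0 < τ) (hσ : 0 < σ) :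
    ∫ s in τ..σ, (lamTau β s)⁻¹ = lamTauInvTail β τ - lamTauInvTail β σ := by
  have hpos : ∀ x ∈ uIcc τ σ, 0 < x := fun x hx => (lt_min hτ hσ).trans_le hx.1
  have hcont : ContinuousOn (fun s => (lamTau β s)⁻¹) (uIcc τ σ) := fun x hx =>
    ((hasDerivAt_lamTau hβ (hpos x hx)).continuousAt.inv₀
      (lamTau_pos hβ (hpos x hx)).ne').continuousWithinAt
  rw [intervalIntegral.integral_eq_sub_of_hasDerivAt
    (fun x hx => hasDerivAt_neg_lamTauInvTail hβ (hpos x hx))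
    hcont.intervalIntegrable]
  ring

lemma hasDerivAt_U0 {σ : ℝ} (hβ : 0 < β + 1) (hσ : 0 < σ) (hτ : 0 < τ) :
    HasDerivAt (fun x => U0 β x σ) (omTau β τ * U0 β τ σ - 1) τ := by
  have hI : HasDerivAt (fun x => ∫ s in x..σ, (lamTau β s)⁻¹) (-(lamTau β τ)⁻¹) τ := by
    refine HasDerivAt.congr_of_eventuallyEq
      ((hasDerivAt_lamTauInvTail hβ hτ).sub_const (lamTauInvTail β σ)) ?_
    filter_upwards [Ioi_mem_nhds hτ] with x hx using intervalIntegral_inv_lamTau hβ hx hσ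
  exact (hasDerivAt_lamTau hβ hτ).mul_of_hasDerivAt_neg_inv hI (lamTau_pos hβ hτ).ne'

lemma hasDerivAt_lamTau_mul_integral_Ioi (hβ : 0 < β + 1) (hτ : 0 < τ) :
    HasDerivAt (fun x => lamTau β x * ∫ s in Ioi x, (lamTau β s)⁻¹)
      (omTau β τ * (lamTau β τ * ∫ s in Ioi τ, (lamTau β s)⁻¹) - 1) τ := by
  have hI : HasDerivAt (fun x => ∫ s in Ioi x, (lamTau β s)⁻¹) (-(lamTau β τ)⁻¹) τ := by
    refine (hasDerivAt_lamTauInvTail hβ hτ).congr_of_eventuallyEq ?_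
    filter_upwards [Ioi_mem_nhds hτ] with x hx using integral_Ioi_inv_lamTau hβ hx
  exact (hasDerivAt_lamTau hβ hτ).mul_of_hasDerivAt_neg_inv hI (lamTau_pos hβ hτ).ne'

lemma omTau_pos (hβ : 0 ≤ β) (hτ : 0 < τ) : 0 < omTau β τ := by
  unfold omTau; positivity

lemma rpow_mul_omTau (hβ : 0 < β + 1) (hτ : 0 < τ) :
    ((β + 1) * τ) ^ (β / (β + 1)) * omTau β τ =
      1 + β * ((β + 1) * τ) ^ (-(1 / (β + 1))) := by
  have hx := mul_pos hβ hτ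
  have hsplit :
      ((β + 1) * τ) ^ (β / (β + 1)) = (β + 1) * τ * ((β + 1) * τ) ^ (-(1 / (β + 1))) := by
    have h := rpow_add hx 1 (-(1 / (β + 1)))
    rw [rpow_one] at h
    rw [← h]
    congr 1; field_simp; ring
  have := (rpow_pos_of_pos hx (-(1 / (β + 1)))).ne'
  rw [omTau, rpow_neg hx.le (β / (β + 1)), hsplit]
  field_simp
  ring

lemma lamTau_mul_integral_Ioi_le (hβ : 0 ≤ β) (hτ : 1 ≤ τ) :
    lamTau β τ * ∫ s in Ioi τ, (lamTau β s)⁻¹ ≤ (β + 1) / omTau β τ := by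
  have hτ0 : 0 < τ := one_pos.trans_le hτ
  have hβ1 : 0 < β + 1 := by linarith
  have hx : 1 ≤ (β + 1) * τ := by nlinarith
  have hdecay : ((β + 1) * τ) ^ (-(1 / (β + 1))) ≤ 1 :=
    rpow_le_one_of_one_le_of_nonpos hx (by simp [hβ1.le])
  rw [integral_Ioi_inv_lamTau hβ1 hτ0, lamTau_mul_lamTauInvTail,
    le_div_iff₀ (omTau_pos hβ hτ0), rpow_mul_omTau hβ1 hτ0]
  nlinarith

end

theorem backward_fundamental_solution (β : ℝ) (hβ : 0 < β) :
    -- ω is the logarithmic derivative of λ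
    (∀ τ > (0 : ℝ), deriv (lamTau β) τ / lamTau β τ = omTau β τ) ∧
    -- (i) integrability of λ⁻¹ at infinity
    (∀ τ > (0 : ℝ), MeasureTheory.IntegrableOn (fun s => (lamTau β s)⁻¹)
      (Set.Ioi τ)) ∧
    -- (ii) the ODE for U₀(·,σ), finite σ
    (∀ σ > (0 : ℝ), ∀ τ > (0 : ℝ),
      deriv (fun x => U0 β x σ) τ - omTau β τ * U0 β τ σ = -1 ∧
      deriv (fun x => deriv (fun y => U0 β y σ) x - omTau β x * U0 β x σ) τ = 0) ∧
    -- (ii) boundary values at τ = σ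
    (∀ σ > (0 : ℝ), U0 β σ σ = 0 ∧ deriv (fun x => U0 β x σ) σ = -1) ∧
    -- (ii) the ODE for the σ = ∞ case
    (∀ τ > (0 : ℝ),
      deriv (fun x => lamTau β x * ∫ s in Set.Ioi x, (lamTau β s)⁻¹) τ
        - omTau β τ * (lamTau β τ * ∫ s in Set.Ioi τ, (lamTau β s)⁻¹) = -1) ∧
    -- (iii) the bound by C/ω
    (∃ C > (0 : ℝ), ∀ τ ≥ (1 : ℝ),
      lamTau β τ * ∫ s in Set.Ioi τ, (lamTau β s)⁻¹ ≤ C / omTau β τ) := by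
  have hβ1 : 0 < β + 1 := by linarith
  have hODE : ∀ σ > (0 : ℝ), ∀ τ > (0 : ℝ),
      deriv (fun x => U0 β x σ) τ - omTau β τ * U0 β τ σ = -1 := fun σ hσ τ hτ => by
    rw [(hasDerivAt_U0 hβ1 hσ hτ).deriv]; ring
  have hU0_self : ∀ σ, U0 β σ σ = 0 := fun σ => by
    rw [U0, intervalIntegral.integral_same, mul_zero]
  refine ⟨fun τ hτ => ?_, fun τ hτ => integrableOn_Ioi_inv_lamTau hβ1 hτ,
    fun σ hσ τ hτ => ⟨hODE σ hσ τ hτ, ?_⟩, fun σ hσ => ⟨hU0_self σ, ?_⟩, fun τ hτ => ?_,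
    ⟨β + 1, hβ1, fun τ hτ => lamTau_mul_integral_Ioi_le hβ.le hτ⟩⟩
  · rw [(hasDerivAt_lamTau hβ1 hτ).deriv, mul_div_cancel_right₀ _ (lamTau_pos hβ1 hτ).ne']
  · have hconst : (fun x => deriv (fun y => U0 β y σ) x - omTau β x * U0 β x σ)
        =ᶠ[𝓝 τ] fun _ => -1 := by
      filter_upwards [Ioi_mem_nhds hτ] with x hx using hODE σ hσ x hx
    rw [hconst.deriv_eq, deriv_const]
  · simpa [hU0_self] using hODE σ hσ σ hσ
  · rw [(hasDerivAt_lamTau_mul_integral_Ioi hβ1 hτ).deriv]; ring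
end
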